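/- arXiv:0707.0108 — 7 statements merged into one kernel-verified Lean document; each statement's English description precedes it below -/
import Mathlib

section
/- Let f be a nonnegative C^2 function on [-2ℓ, 2ℓ] ⊂ ℝ satisfying f'' ≥ f - a for some constant a > 0. If max of f on [-ℓ, ℓ] is at least 2a, then ∫_{-2ℓ}^{2ℓ} f ≥ 2√2 · a · sinh(ℓ/√2). -/
/-!
Let `x₀ ∈ [-ℓ, ℓ]` with `f x₀ ≥ 2a`. For `g = f - a` we have `g'' ≥ g`, and the even part
`W t = g (x₀ + t) + g (x₀ - t) - 2 g(x₀) cosh t` satisfies `W'' ≥ W`, `W 0 = W' 0 = 0`.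
Factoring `D² - 1 = (D - 1)(D + 1)` and applying the first-order comparison twice gives `W ≥ 0`,
hence `f (x₀ + t) + f (x₀ - t) ≥ 2a + 2a cosh t ≥ 2a cosh (t / √2)` for `0 ≤ t < ℓ`.
Integrating over `[0, ℓ]` bounds `∫_{x₀-ℓ}^{x₀+ℓ} f`, and `f ≥ 0` bounds the rest.
-/

open Real Set intervalIntegral

/-- Multiplying by `exp (-λ x)` turns `u' ≥ λ u` into monotonicity. -/
lemma nonneg_of_le_deriv_of_nonneg_zero {c lam : ℝ} {u u' : ℝ → ℝ}
    (hu : ∀ x ∈ Ico 0 c, HasDerivAt u (u' x) x) (hle : ∀ x ∈ Ico 0 c, lam * u x ≤ u' x)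
    (h0 : 0 ≤ u 0) : ∀ x ∈ Ico 0 c, 0 ≤ u x := by
  set φ : ℝ → ℝ := fun x => exp (-lam * x) * u x
  have hφ : ∀ x ∈ Ico 0 c, HasDerivAt φ (exp (-lam * x) * (u' x - lam * u x)) x := by
    intro x hx
    have hexp := ((hasDerivAt_id' x).const_mul (-lam)).exp
    exact (hexp.mul (hu x hx)).congr_deriv (by ring)
  have hmono : MonotoneOn φ (Ico 0 c) := by
    refine monotoneOn_of_hasDerivWithinAt_nonneg
      (f' := fun x => exp (-lam * x) * (u' x - lam * u x)) (convex_Ico 0 c)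
      (fun x hx => (hφ x hx).continuousAt.continuousWithinAt) (fun x hx => ?_) (fun x hx => ?_)
    · exact (hφ x (interior_subset hx)).hasDerivWithinAt
    · exact mul_nonneg (exp_pos _).le (sub_nonneg.2 (hle x (interior_subset hx)))
  intro x hx
  have h0mem : (0 : ℝ) ∈ Ico 0 c := ⟨le_rfl, hx.1.trans_lt hx.2⟩
  have hφx : φ 0 ≤ φ x := hmono h0mem hx hx.1
  simp only [φ, mul_zero, exp_zero, one_mul] at hφx
  exact (mul_nonneg_iff_of_pos_left (exp_pos _)).1 (h0.trans hφx)

lemma nonneg_of_le_deriv_deriv {c : ℝ} {W W' W'' : ℝ → ℝ}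
    (hW : ∀ x ∈ Ico 0 c, HasDerivAt W (W' x) x) (hW' : ∀ x ∈ Ico 0 c, HasDerivAt W' (W'' x) x)
    (hle : ∀ x ∈ Ico 0 c, W x ≤ W'' x) (h0 : 0 ≤ W 0) (h0' : 0 ≤ W' 0) :
    ∀ x ∈ Ico 0 c, 0 ≤ W x := by
  have hsum : ∀ x ∈ Ico 0 c, 0 ≤ W' x + W x :=
    nonneg_of_le_deriv_of_nonneg_zero (lam := 1) (fun x hx => (hW' x hx).add (hW x hx))
      (fun x hx => by linarith [hle x hx]) (by linarith)
  exact nonneg_of_le_deriv_of_nonneg_zero (lam := -1) hW (fun x hx => by linarith [hsum x hx]) h0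

lemma two_mul_mul_cosh_le_add {g g' g'' : ℝ → ℝ} {x₀ c : ℝ}
    (hg : ∀ x ∈ Ioo (x₀ - c) (x₀ + c), HasDerivAt g (g' x) x)
    (hg' : ∀ x ∈ Ioo (x₀ - c) (x₀ + c), HasDerivAt g' (g'' x) x)
    (hle : ∀ x ∈ Ioo (x₀ - c) (x₀ + c), g x ≤ g'' x) :
    ∀ t ∈ Ico 0 c, 2 * g x₀ * cosh t ≤ g (x₀ + t) + g (x₀ - t) := by
  have hmem : ∀ t ∈ Ico 0 c, x₀ + t ∈ Ioo (x₀ - c) (x₀ + c) ∧ x₀ - t ∈ Ioo (x₀ - c) (x₀ + c) :=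
    fun t ht => ⟨⟨by linarith [ht.1, ht.2], by linarith [ht.2]⟩,
      ⟨by linarith [ht.2], by linarith [ht.1, ht.2]⟩⟩
  have hW := nonneg_of_le_deriv_deriv (c := c)
    (W := fun t => g (x₀ + t) + g (x₀ - t) - 2 * g x₀ * cosh t)
    (W' := fun t => g' (x₀ + t) - g' (x₀ - t) - 2 * g x₀ * sinh t)
    (W'' := fun t => g'' (x₀ + t) + g'' (x₀ - t) - 2 * g x₀ * cosh t)
    (fun t ht => by
      have hp := (hg _ (hmem t ht).1).comp_const_add x₀ t
      have hm := (hg _ (hmem t ht).2).comp_const_sub x₀ t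
      exact ((hp.add hm).sub ((hasDerivAt_cosh t).const_mul (2 * g x₀))).congr_deriv (by ring))
    (fun t ht => by
      have hp := (hg' _ (hmem t ht).1).comp_const_add x₀ t
      have hm := (hg' _ (hmem t ht).2).comp_const_sub x₀ t
      exact ((hp.sub hm).sub ((hasDerivAt_sinh t).const_mul (2 * g x₀))).congr_deriv (by ring))
    (fun t ht => by linarith [hle _ (hmem t ht).1, hle _ (hmem t ht).2])
    (by simp only [add_zero, sub_zero, cosh_zero]; linarith)
    (by simp only [add_zero, sub_zero, sinh_zero]; linarith)
  exact fun t ht => by linarith [hW t ht]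

lemma ContDiffOn.hasDerivAt_deriv {f : ℝ → ℝ} {s : Set ℝ} {n : WithTop ℕ∞} {x : ℝ}
    (hf : ContDiffOn ℝ n f s) (hs : IsOpen s) (hn : n ≠ 0) (hx : x ∈ s) :
    HasDerivAt f (deriv f x) x :=
  ((hf.contDiffAt (hs.mem_nhds hx)).differentiableAt hn).hasDerivAt

lemma two_mul_cosh_div_sqrt_two_le_add {f : ℝ → ℝ} {a x₀ ℓ : ℝ} (ha : 0 ≤ a)
    (hf : ContDiffOn ℝ 2 f (Ioo (x₀ - ℓ) (x₀ + ℓ)))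
    (hineq : ∀ x ∈ Ioo (x₀ - ℓ) (x₀ + ℓ), f x - a ≤ deriv (deriv f) x) (hfx₀ : 2 * a ≤ f x₀) :
    ∀ t ∈ Ioo 0 ℓ, 2 * a * cosh (t / √2) ≤ f (x₀ + t) + f (x₀ - t) := by
  have hcosh : ∀ t ∈ Ico 0 ℓ, 2 * (f x₀ - a) * cosh t ≤ (f (x₀ + t) - a) + (f (x₀ - t) - a) :=
    two_mul_mul_cosh_le_add (g := fun x => f x - a)
      (fun x hx => (hf.hasDerivAt_deriv isOpen_Ioo two_ne_zero hx).sub_const a)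
      (fun x hx =>
        (hf.deriv_of_isOpen isOpen_Ioo le_rfl).hasDerivAt_deriv isOpen_Ioo one_ne_zero hx)
      hineq
  intro t ht
  have hcosh_le : cosh (t / √2) ≤ cosh t := by
    rw [cosh_le_cosh, abs_of_nonneg ht.1.le, abs_of_nonneg (div_nonneg ht.1.le (sqrt_nonneg 2))]
    exact div_le_self ht.1.le one_lt_sqrt_two.le
  nlinarith [hcosh t (Ioo_subset_Ico_self ht), mul_le_mul_of_nonneg_left hcosh_le ha,
    mul_nonneg (sub_nonneg.2 hfx₀) (cosh_pos t).le]

section Symmetrization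

variable {f : ℝ → ℝ} {x₀ r : ℝ}

lemma IntervalIntegrable.comp_add_and_comp_sub
    (hf : IntervalIntegrable f MeasureTheory.volume (x₀ - r) (x₀ + r)) :
    IntervalIntegrable (fun t => f (x₀ + t)) MeasureTheory.volume 0 r ∧
      IntervalIntegrable (fun t => f (x₀ - t)) MeasureTheory.volume 0 r := by
  have hsub : uIcc 0 r ⊆ uIcc (-r) r := by
    refine uIcc_subset_uIcc ?_ right_mem_uIcc
    rcases le_total 0 r with h | h <;> simp [h]
  constructor
  · simpa using (hf.comp_add_left x₀).mono_set (by simpa using hsub)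
  · simpa using (hf.comp_sub_left x₀).symm.mono_set (by simpa using hsub)

lemma integral_comp_add_add_comp_sub
    (hf : IntervalIntegrable f MeasureTheory.volume (x₀ - r) (x₀ + r)) :
    ∫ t in (0 : ℝ)..r, (f (x₀ + t) + f (x₀ - t)) = ∫ x in (x₀ - r)..(x₀ + r), f x := by
  have hx₀ : x₀ ∈ uIcc (x₀ - r) (x₀ + r) := by
    rcases le_total 0 r with h | h <;> simp [mem_uIcc, h]
  obtain ⟨hplus, hminus⟩ := hf.comp_add_and_comp_sub
  rw [integral_add hplus hminus, integral_comp_add_left, integral_comp_sub_left, add_zero,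
    sub_zero, add_comm, integral_add_adjacent_intervals]
  · exact hf.mono_set (uIcc_subset_uIcc left_mem_uIcc hx₀)
  · exact hf.mono_set (uIcc_subset_uIcc hx₀ right_mem_uIcc)

end Symmetrization

lemma integral_cosh_div {c : ℝ} (hc : c ≠ 0) (a b : ℝ) :
    ∫ x in a..b, cosh (x / c) = c * sinh (b / c) - c * sinh (a / c) := by
  refine integral_eq_sub_of_hasDerivAt (f := fun x => c * sinh (x / c)) (fun x _ => ?_)
    ((continuous_cosh.comp (continuous_id.div_const c)).intervalIntegrable a b)
  exact (((hasDerivAt_id' x).div_const c).sinh.const_mul c).congr_deriv (by field_simp)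

theorem stmt_0_general (ℓ a : ℝ) (f : ℝ → ℝ) (ha : 0 < a)
    (hf : ContDiffOn ℝ 2 f (Icc (-(2*ℓ)) (2*ℓ)))
    (hpos : ∀ x ∈ Icc (-(2*ℓ)) (2*ℓ), 0 ≤ f x)
    (hineq : ∀ x ∈ Icc (-(2*ℓ)) (2*ℓ), f x - a ≤ deriv (deriv f) x)
    (hmax : ∃ x₀ ∈ Icc (-ℓ) ℓ, 2*a ≤ f x₀) :
    2 * Real.sqrt 2 * a * Real.sinh (ℓ / Real.sqrt 2) ≤ ∫ x in (-(2*ℓ))..(2*ℓ), f x := by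
  obtain ⟨x₀, ⟨hx₀l, hx₀r⟩, hfx₀⟩ := hmax
  have hℓ : 0 ≤ ℓ := by linarith
  have hI : Icc (x₀ - ℓ) (x₀ + ℓ) ⊆ Icc (-(2*ℓ)) (2*ℓ) := Icc_subset_Icc (by linarith) (by linarith)
  have hbound := two_mul_cosh_div_sqrt_two_le_add ha.le (hf.mono (Ioo_subset_Icc_self.trans hI))
    (fun x hx => hineq x (hI (Ioo_subset_Icc_self hx))) hfx₀
  have hfi : IntervalIntegrable f MeasureTheory.volume (x₀ - ℓ) (x₀ + ℓ) :=
    (hf.continuousOn.mono ((uIcc_of_le (by linarith)).trans_subset hI)).intervalIntegrable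
  obtain ⟨hplus, hminus⟩ := hfi.comp_add_and_comp_sub
  calc 2 * √2 * a * sinh (ℓ / √2) = ∫ t in (0 : ℝ)..ℓ, 2 * a * cosh (t / √2) := by
        rw [integral_const_mul, integral_cosh_div (by positivity), zero_div, sinh_zero]
        ring
    _ ≤ ∫ t in (0 : ℝ)..ℓ, (f (x₀ + t) + f (x₀ - t)) :=
        integral_mono_on_of_le_Ioo hℓ
          (by apply Continuous.intervalIntegrable; fun_prop) (hplus.add hminus) hbound
    _ = ∫ x in (x₀ - ℓ)..(x₀ + ℓ), f x := integral_comp_add_add_comp_sub hfi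
    _ ≤ ∫ x in (-(2*ℓ))..(2*ℓ), f x :=
        integral_mono_interval (by linarith) (by linarith) (by linarith)
          ((MeasureTheory.ae_restrict_mem measurableSet_Ioc).mono
            fun x hx => hpos x (Ioc_subset_Icc_self hx))
          (hf.continuousOn.mono (uIcc_of_le (by linarith)).subset).intervalIntegrable

/-- ODE comparison lemma (Lemma `l:comp` in Colding–Minicozzi): a nonnegative `C²`
function on `[-2ℓ, 2ℓ]` with `f'' ≥ f - a` whose maximum on `[-ℓ, ℓ]` is at least `2a`
satisfies `∫_{-2ℓ}^{2ℓ} f ≥ 2√2 · a · sinh(ℓ/√2)`. -/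
theorem stmt_0 (ℓ a : ℝ) (f : ℝ → ℝ) (hℓ : 0 < ℓ) (ha : 0 < a)
    (hf : ContDiffOn ℝ 2 f (Icc (-(2*ℓ)) (2*ℓ)))
    (hpos : ∀ x ∈ Icc (-(2*ℓ)) (2*ℓ), 0 ≤ f x)
    (hineq : ∀ x ∈ Icc (-(2*ℓ)) (2*ℓ), f x - a ≤ deriv (deriv f) x)
    (hmax : ∃ x₀ ∈ Icc (-ℓ) ℓ, 2*a ≤ f x₀) :
    2 * Real.sqrt 2 * a * Real.sinh (ℓ / Real.sqrt 2) ≤ ∫ x in (-(2*ℓ))..(2*ℓ), f x :=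
  stmt_0_general ℓ a f ha hf hpos hineq hmax
end

section
/- If S and T are N×2 real matrices, then |det(SᵀS) - det(TᵀT)| ≤ 2·|T - S|·max(|S|³, |T|³), where |·| denotes the Frobenius (Hilbert–Schmidt) norm. -/
/-!
With `‖·‖` the Frobenius norm, `det` is a quadratic form on `2 × 2` matrices whose polar form
is bounded by `½ ‖X‖ ‖Y‖`, so `|det A - det B| ≤ ½ ‖A - B‖ ‖A + B‖`. For the Gram matrices
`A = SᵀS`, `B = TᵀT`, submultiplicativity gives `‖A - B‖ ≤ ‖S - T‖ (‖S‖ + ‖T‖)` (write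
`A - B = (S - T)ᵀS + Tᵀ(S - T)`) and `‖A + B‖ ≤ ‖S‖² + ‖T‖²`; finally
`(x + y)(x² + y²) ≤ 4 max(x, y)³`.
-/

open Matrix

attribute [local instance] Matrix.frobeniusNormedAddCommGroup

namespace Matrix

variable {m n : Type*} [Fintype m] [Fintype n]

theorem frobenius_norm_eq_sqrt (A : Matrix m n ℝ) : ‖A‖ = √(∑ i, ∑ j, A i j ^ 2) := by
  simp [frobenius_norm_def, Real.sqrt_eq_rpow]

theorem frobenius_norm_gram_sub_gram_le (S T : Matrix m n ℝ) :
    ‖Sᵀ * S - Tᵀ * T‖ ≤ ‖S - T‖ * (‖S‖ + ‖T‖) := by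
  have hsplit : Sᵀ * S - Tᵀ * T = (S - T)ᵀ * S + Tᵀ * (S - T) := by
    simp only [transpose_sub, Matrix.sub_mul, Matrix.mul_sub]; abel
  calc ‖Sᵀ * S - Tᵀ * T‖ ≤ ‖(S - T)ᵀ * S‖ + ‖Tᵀ * (S - T)‖ := hsplit ▸ norm_add_le _ _
    _ ≤ ‖S - T‖ * ‖S‖ + ‖T‖ * ‖S - T‖ := by
      gcongr
      · exact (frobenius_norm_mul _ _).trans_eq (by rw [frobenius_norm_transpose])
      · exact (frobenius_norm_mul _ _).trans_eq (by rw [frobenius_norm_transpose])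
    _ = ‖S - T‖ * (‖S‖ + ‖T‖) := by ring

theorem frobenius_norm_gram_add_gram_le (S T : Matrix m n ℝ) :
    ‖Sᵀ * S + Tᵀ * T‖ ≤ ‖S‖ ^ 2 + ‖T‖ ^ 2 := by
  have hgram (A : Matrix m n ℝ) : ‖Aᵀ * A‖ ≤ ‖A‖ ^ 2 :=
    (frobenius_norm_mul _ _).trans_eq (by rw [frobenius_norm_transpose, sq])
  exact (norm_add_le _ _).trans (add_le_add (hgram S) (hgram T))

theorem abs_det_sub_det_le_fin_two (A B : Matrix (Fin 2) (Fin 2) ℝ) :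
    |A.det - B.det| ≤ ‖A - B‖ * ‖A + B‖ / 2 := by
  rw [frobenius_norm_eq_sqrt, frobenius_norm_eq_sqrt, ← Real.sqrt_mul (by positivity),
    le_div_iff₀ two_pos, ← abs_two, ← abs_mul]
  apply Real.abs_le_sqrt
  have hpolar : (A.det - B.det) * 2 = (A - B) 0 0 * (A + B) 1 1 + (A - B) 1 1 * (A + B) 0 0
      - (A - B) 0 1 * (A + B) 1 0 - (A - B) 1 0 * (A + B) 0 1 := by
    simp only [det_fin_two, sub_apply, add_apply]; ring
  rw [hpolar]
  simp only [Fin.sum_univ_two]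
  generalize (A - B) 0 0 = x₁, (A - B) 1 1 = x₂, (A - B) 0 1 = x₃, (A - B) 1 0 = x₄,
    (A + B) 1 1 = y₁, (A + B) 0 0 = y₂, (A + B) 1 0 = y₃, (A + B) 0 1 = y₄
  -- Cauchy–Schwarz in `ℝ⁴`, through Lagrange's identity
  nlinarith [sq_nonneg (x₁ * y₂ - x₂ * y₁), sq_nonneg (x₁ * y₃ + x₃ * y₁),
    sq_nonneg (x₁ * y₄ + x₄ * y₁), sq_nonneg (x₂ * y₃ + x₃ * y₂),
    sq_nonneg (x₂ * y₄ + x₄ * y₂), sq_nonneg (x₃ * y₄ - x₄ * y₃)]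

end Matrix

theorem add_mul_sq_add_sq_le_four_mul_max {x y : ℝ} (hx : 0 ≤ x) (hy : 0 ≤ y) :
    (x + y) * (x ^ 2 + y ^ 2) ≤ 4 * max (x ^ 3) (y ^ 3) := by
  wlog hxy : y ≤ x generalizing x y
  · rw [max_comm, add_comm x, add_comm (x ^ 2)]
    exact this hy hx (le_of_not_ge hxy)
  rw [max_eq_left (by gcongr)]
  nlinarith [mul_le_mul hxy hxy hy hx, mul_le_mul_of_nonneg_left hxy (sq_nonneg x)]

/-- If `S` and `T` are `N × 2` real matrices, then
`|det(SᵀS) - det(TᵀT)| ≤ 2 · |T - S| · max(|S|³, |T|³)`,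
where `|·|` is the Frobenius (Hilbert–Schmidt) norm, given by the square root
of the sum of the squares of the entries. -/
theorem stmt_1 (N : ℕ) (S T : Matrix (Fin N) (Fin 2) ℝ) :
    |(S.transpose * S).det - (T.transpose * T).det| ≤
      2 * Real.sqrt (∑ i, ∑ j, (T i j - S i j)^2) *
        max ((Real.sqrt (∑ i, ∑ j, (S i j)^2))^3) ((Real.sqrt (∑ i, ∑ j, (T i j)^2))^3) := by
  have hTS : √(∑ i, ∑ j, (T i j - S i j) ^ 2) = ‖T - S‖ := (frobenius_norm_eq_sqrt (T - S)).symm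
  rw [← frobenius_norm_eq_sqrt S, ← frobenius_norm_eq_sqrt T, hTS]
  calc |(Sᵀ * S).det - (Tᵀ * T).det|
      ≤ ‖Sᵀ * S - Tᵀ * T‖ * ‖Sᵀ * S + Tᵀ * T‖ / 2 := abs_det_sub_det_le_fin_two _ _
    _ ≤ ‖S - T‖ * (‖S‖ + ‖T‖) * (‖S‖ ^ 2 + ‖T‖ ^ 2) / 2 := by
      gcongr
      · exact frobenius_norm_gram_sub_gram_le S T
      · exact frobenius_norm_gram_add_gram_le S T
    _ = ‖T - S‖ * ((‖S‖ + ‖T‖) * (‖S‖ ^ 2 + ‖T‖ ^ 2)) / 2 := by rw [norm_sub_rev]; ring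
    _ ≤ ‖T - S‖ * (4 * max (‖S‖ ^ 3) (‖T‖ ^ 3)) / 2 := by
      gcongr ‖T - S‖ * ?_ / 2
      exact add_mul_sq_add_sq_le_four_mul_max (norm_nonneg S) (norm_nonneg T)
    _ = 2 * ‖T - S‖ * max (‖S‖ ^ 3) (‖T‖ ^ 3) := by ring
end

section
/- Let W : [0, ∞) → ℝ be a nonnegative function differentiable (in the sense that the forward difference quotients satisfy the inequality) with W'(t) ≤ -4π + (3/(4(t + C)))·W(t) for some constant C > 0. Then there exists a finite time T > 0 such that it is impossible for W to remain nonnegative on [0, T]; i.e., W must vanish before some explicit finite time. More precisely, for any T with C^{-3/4}·W(0) < 16π·((T+C)^{1/4} - C^{1/4}), we get a contradiction with W(T) ≥ 0, so W hits zero before such a T. -/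
open Real Set

/-!
Along a solution of `W' ≤ -a + p W / (t + C)` with `p ≠ 1`, the quantity
`(t + C)^(-p) W(t) + a/(1-p) (t + C)^(1-p)` is nonincreasing: the weight `(t + C)^(-p)` is the
integrating factor of the linear part, and the second term is a primitive of
`a (t + C)^(-p)`. For `p = 3/4` and `a = 4π` its value at `T` is at least `16π (T + C)^(1/4)`
as long as `W(T) ≥ 0`, which is incompatible with the bound at `0` once `T` is large.
-/

noncomputable def extinctionLyapunov (p a C : ℝ) (W : ℝ → ℝ) (t : ℝ) : ℝ :=
  (t + C) ^ (-p) * W t + a / (1 - p) * (t + C) ^ (1 - p)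

theorem hasDerivAt_extinctionLyapunov {p a C t W' : ℝ} {W : ℝ → ℝ} (hp : p ≠ 1)
    (ht : 0 < t + C) (hW : HasDerivAt W W' t) :
    HasDerivAt (extinctionLyapunov p a C W)
      ((t + C) ^ (-p) * (W' - p / (t + C) * W t + a)) t := by
  have hshift : HasDerivAt (fun s : ℝ => s + C) 1 t := (hasDerivAt_id t).add_const C
  have hweight := hshift.rpow_const (p := -p) (Or.inl ht.ne')
  have hprimitive := (hshift.rpow_const (p := 1 - p) (Or.inl ht.ne')).const_mul (a / (1 - p))
  refine ((hweight.mul hW).add hprimitive).congr_deriv ?_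
  have hp' : 1 - p ≠ 0 := sub_ne_zero.mpr hp.symm
  rw [rpow_sub_one ht.ne', sub_sub_cancel_left]
  field_simp
  ring

theorem antitoneOn_extinctionLyapunov {p a C : ℝ} {W W' : ℝ → ℝ} {D : Set ℝ} (hD : Convex ℝ D)
    (hp : p ≠ 1) (hpos : ∀ t ∈ D, 0 < t + C) (hW : ∀ t ∈ D, HasDerivAt W (W' t) t)
    (hineq : ∀ t ∈ D, W' t ≤ -a + p / (t + C) * W t) :
    AntitoneOn (extinctionLyapunov p a C W) D := by
  have hderiv t (ht : t ∈ D) := hasDerivAt_extinctionLyapunov (a := a) hp (hpos t ht) (hW t ht)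
  refine antitoneOn_of_hasDerivWithinAt_nonpos hD
    (fun t ht => (hderiv t ht).continuousAt.continuousWithinAt)
    (fun t ht => (hderiv t (interior_subset ht)).hasDerivWithinAt) fun t ht => ?_
  have ht := interior_subset ht
  exact mul_nonpos_of_nonneg_of_nonpos (rpow_pos_of_pos (hpos t ht) _).le
    (by linarith [hineq t ht])

/-- Finite extinction: a nonnegative width function `W` satisfying
`W'(t) ≤ -4π + (3/(4(t+C)))·W(t)` cannot remain nonnegative past the explicit time `T`
determined by `C^{-3/4}·W(0) < 16π·((T+C)^{1/4} - C^{1/4})`. -/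
theorem stmt_3 (C T : ℝ) (W : ℝ → ℝ) (hC : 0 < C) (hT : 0 < T)
    (hdiff : ∀ t ∈ Icc (0:ℝ) T, HasDerivAt W (deriv W t) t)
    (hineq : ∀ t ∈ Icc (0:ℝ) T, deriv W t ≤ -(4*π) + 3/(4*(t+C)) * W t)
    (hbig : C ^ (-(3:ℝ)/4) * W 0 < 16*π*((T+C) ^ ((1:ℝ)/4) - C ^ ((1:ℝ)/4))) :
    ¬ (∀ t ∈ Icc (0:ℝ) T, 0 ≤ W t) := by
  intro hnonneg
  have hanti : AntitoneOn (extinctionLyapunov (3 / 4) (4 * π) C W) (Icc 0 T) :=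
    antitoneOn_extinctionLyapunov (convex_Icc 0 T) (by norm_num)
      (fun t ht => by linarith [ht.1]) hdiff fun t ht => by
        convert hineq t ht using 3; field_simp
  have hdecay := hanti ⟨le_rfl, hT.le⟩ ⟨hT.le, le_rfl⟩ hT.le
  have hweightT : 0 ≤ (T + C) ^ (-(3:ℝ)/4) * W T :=
    mul_nonneg (rpow_pos_of_pos (by linarith) _).le (hnonneg T ⟨hT.le, le_rfl⟩)
  simp only [extinctionLyapunov, zero_add] at hdecay
  norm_num at hdecay hweightT hbig
  linarith
end

section
/- Let f be a C^2 function on [x₀, b] ⊂ ℝ with f ≥ 0, f(x₀) > 0, f'(x₀) ≥ 0, and f'' ≥ (1/2)·f on [x₀, b]. Then for all t ∈ [0, b - x₀], f(x₀ + t) ≥ f(x₀)·cosh(t/√2). -/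
open Real Set

/-!
The Wronskian `W = f' g - f g'` of `f` against `g x = cosh (k (x - a))`, the solution of
`g'' = k² g` with `g a = 1`, `g' a = 0`, satisfies `W' = (f'' - k² f) g ≥ 0` and `W a = f' a ≥ 0`.
Hence `W ≥ 0`, i.e. `(f / g)' = W / g² ≥ 0`, so `f / g` increases from its value `f a` at `a`.
-/

theorem monotoneOn_div_of_wronskian_nonneg {f g f' g' : ℝ → ℝ} {a b : ℝ}
    (hf : ContinuousOn f (Icc a b)) (hg : ContinuousOn g (Icc a b))
    (hg0 : ∀ x ∈ Icc a b, g x ≠ 0)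
    (hf' : ∀ x ∈ Ioo a b, HasDerivAt f (f' x) x) (hg' : ∀ x ∈ Ioo a b, HasDerivAt g (g' x) x)
    (hW : ∀ x ∈ Ioo a b, 0 ≤ f' x * g x - f x * g' x) :
    MonotoneOn (fun x => f x / g x) (Icc a b) := by
  have hderiv : ∀ x ∈ Ioo a b,
      HasDerivAt (fun x => f x / g x) ((f' x * g x - f x * g' x) / g x ^ 2) x := fun x hx =>
    (hf' x hx).div (hg' x hx) (hg0 x (Ioo_subset_Icc_self hx))
  refine monotoneOn_of_deriv_nonneg (convex_Icc a b) (hf.div hg hg0) ?_ ?_ <;> rw [interior_Icc]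
  · exact fun x hx => (hderiv x hx).differentiableAt.differentiableWithinAt
  · intro x hx
    rw [(hderiv x hx).deriv]
    exact div_nonneg (hW x hx) (sq_nonneg _)

theorem hasDerivAt_cosh_mul_sub (k a x : ℝ) :
    HasDerivAt (fun x => cosh (k * (x - a))) (k * sinh (k * (x - a))) x := by
  simpa [mul_comm] using (((hasDerivAt_id x).sub_const a).const_mul k).cosh

theorem hasDerivAt_mul_sinh_mul_sub (k a x : ℝ) :
    HasDerivAt (fun x => k * sinh (k * (x - a))) (k ^ 2 * cosh (k * (x - a))) x :=
  ((((hasDerivAt_id x).sub_const a).const_mul k).sinh.const_mul k).congr_deriv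
    (by simp only [id]; ring)

section CoshComparison

variable {f f' f'' : ℝ → ℝ} {a b k : ℝ}

theorem cosh_wronskian_nonneg (hf : ContinuousOn f (Icc a b))
    (hf' : ∀ x ∈ Ioo a b, HasDerivAt f (f' x) x) (hf'' : ∀ x ∈ Ico a b, HasDerivAt f' (f'' x) x)
    (hk : ∀ x ∈ Ioo a b, k ^ 2 * f x ≤ f'' x) (ha : 0 ≤ f' a) :
    ∀ x ∈ Ico a b, 0 ≤ f' x * cosh (k * (x - a)) - f x * (k * sinh (k * (x - a))) := by
  set W : ℝ → ℝ := fun x => f' x * cosh (k * (x - a)) - f x * (k * sinh (k * (x - a)))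
  have hderiv : ∀ x ∈ Ioo a b, HasDerivAt W ((f'' x - k ^ 2 * f x) * cosh (k * (x - a))) x := by
    intro x hx
    exact (((hf'' x (Ioo_subset_Ico_self hx)).mul (hasDerivAt_cosh_mul_sub k a x)).sub
      ((hf' x hx).mul (hasDerivAt_mul_sinh_mul_sub k a x))).congr_deriv (by ring)
  have hcont : ContinuousOn W (Ico a b) :=
    ((continuousOn_of_forall_continuousAt fun x hx => (hf'' x hx).continuousAt).mul
      (by fun_prop)).sub ((hf.mono Ico_subset_Icc_self).mul (by fun_prop))
  have hmono : MonotoneOn W (Ico a b) := by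
    refine monotoneOn_of_deriv_nonneg (convex_Ico a b) hcont ?_ ?_ <;> rw [interior_Ico]
    · exact fun x hx => (hderiv x hx).differentiableAt.differentiableWithinAt
    · intro x hx
      rw [(hderiv x hx).deriv]
      exact mul_nonneg (sub_nonneg.2 (hk x hx)) (cosh_pos _).le
  intro x hx
  have hWa : W a = f' a := by simp [W]
  calc 0 ≤ W a := hWa ▸ ha
    _ ≤ W x := hmono ⟨le_rfl, hx.1.trans_lt hx.2⟩ hx hx.1

theorem mul_cosh_le_of_sq_mul_le_deriv2 (hf : ContinuousOn f (Icc a b))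
    (hf' : ∀ x ∈ Ioo a b, HasDerivAt f (f' x) x) (hf'' : ∀ x ∈ Ico a b, HasDerivAt f' (f'' x) x)
    (hk : ∀ x ∈ Ioo a b, k ^ 2 * f x ≤ f'' x) (ha : 0 ≤ f' a) :
    ∀ x ∈ Icc a b, f a * cosh (k * (x - a)) ≤ f x := by
  have hmono := monotoneOn_div_of_wronskian_nonneg hf (by fun_prop) (fun x _ => (cosh_pos _).ne')
    hf' (fun x _ => hasDerivAt_cosh_mul_sub k a x)
    (fun x hx => cosh_wronskian_nonneg hf hf' hf'' hk ha x (Ioo_subset_Ico_self hx))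
  intro x hx
  have := hmono ⟨le_rfl, hx.1.trans hx.2⟩ hx hx.1
  simp only [sub_self, mul_zero, cosh_zero, div_one] at this
  exact (le_div_iff₀ (cosh_pos _)).1 this

end CoshComparison

theorem hasDerivAt_deriv_of_contDiffOn_two {f : ℝ → ℝ} {s : Set ℝ} (hf : ContDiffOn ℝ 2 f s)
    (hs : IsOpen s) {x : ℝ} (hx : x ∈ s) :
    HasDerivAt f (deriv f x) x ∧ HasDerivAt (deriv f) (deriv (deriv f) x) x := by
  have hf' : ContDiffOn ℝ 1 (deriv f) s := hf.deriv_of_isOpen hs (by norm_num)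
  exact ⟨((hf.differentiableOn (by norm_num)) x hx).differentiableAt (hs.mem_nhds hx) |>.hasDerivAt,
    ((hf'.differentiableOn one_ne_zero) x hx).differentiableAt (hs.mem_nhds hx) |>.hasDerivAt⟩

theorem stmt_6_general (x₀ b : ℝ) (f : ℝ → ℝ)
    (hf : ContDiffOn ℝ 2 f (Icc x₀ b))
    (h0 : 0 < f x₀)
    (h0' : 0 ≤ deriv f x₀)
    (hineq : ∀ x ∈ Icc x₀ b, f x / 2 ≤ deriv (deriv f) x) :
    ∀ t ∈ Icc (0:ℝ) (b - x₀), f x₀ * Real.cosh (t / Real.sqrt 2) ≤ f (x₀ + t) := by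
  intro t ht
  have hfIoo := fun x (hx : x ∈ Ioo x₀ b) =>
    hasDerivAt_deriv_of_contDiffOn_two (hf.mono Ioo_subset_Icc_self) isOpen_Ioo hx
  -- `deriv f` must be differentiable at `x₀` (so the Wronskian starts at `deriv f x₀`):
  -- otherwise `deriv (deriv f) x₀` is the junk value `0 < f x₀ / 2`.
  have hdiff₀ : DifferentiableAt ℝ (deriv f) x₀ :=
    differentiableAt_of_deriv_ne_zero
      (by linarith [hineq x₀ ⟨le_rfl, by linarith [ht.1, ht.2]⟩])
  have hk : (Real.sqrt 2)⁻¹ ^ 2 = 1 / 2 := by rw [inv_pow, sq_sqrt zero_le_two, one_div]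
  have key := mul_cosh_le_of_sq_mul_le_deriv2 (k := (Real.sqrt 2)⁻¹) hf.continuousOn
    (fun x hx => (hfIoo x hx).1)
    (fun x hx => (eq_or_lt_of_le hx.1).elim (fun h => h ▸ hdiff₀.hasDerivAt)
      fun h => (hfIoo x ⟨h, hx.2⟩).2)
    (fun x hx => by rw [hk]; linarith [hineq x (Ioo_subset_Icc_self hx)]) h0'
    (x₀ + t) ⟨by linarith [ht.1], by linarith [ht.2]⟩
  rwa [add_sub_cancel_left, inv_mul_eq_div] at key

/-- Riccati/cosh comparison: a nonnegative `C²` function with `f(x₀) > 0`, `f'(x₀) ≥ 0`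
and `f'' ≥ f/2` on `[x₀, b]` satisfies `f(x₀+t) ≥ f(x₀)·cosh(t/√2)` for `t ∈ [0, b-x₀]`. -/
theorem stmt_6 (x₀ b : ℝ) (f : ℝ → ℝ) (hx : x₀ < b)
    (hf : ContDiffOn ℝ 2 f (Icc x₀ b))
    (hpos : ∀ x ∈ Icc x₀ b, 0 ≤ f x) (h0 : 0 < f x₀)
    (h0' : 0 ≤ deriv f x₀)
    (hineq : ∀ x ∈ Icc x₀ b, f x / 2 ≤ deriv (deriv f) x) :
    ∀ t ∈ Icc (0:ℝ) (b - x₀), f x₀ * Real.cosh (t / Real.sqrt 2) ≤ f (x₀ + t) :=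
  stmt_6_general x₀ b f hf h0 h0' hineq
end

section
/- Let f, g : S¹ → ℝ^N be C^1 maps agreeing at a point, and let ρ > 0 satisfy ρ² = ∫|f'-g'|² / (8·∫(|f'|² + |g'|²)) (assume the denominator is positive). Define ŵ on the annulus B₁ \ B_{1-ρ} ⊂ ℝ² in polar coordinates by ŵ(r,θ) = f(θ) + ((r + ρ - 1)/ρ)·(g(θ) - f(θ)). Then the Dirichlet energy ∫_{B₁ \ B_{1-ρ}} |∇ŵ|² ≤ (17/√2)·(∫_{S¹}|f'-g'|² · ∫_{S¹}(|f'|²+|g'|²))^{1/2}. -/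
open Real Set intervalIntegral

/-!
With `s = (r + ρ - 1)/ρ ∈ [0, 1]`, convexity gives `‖f' + s (g' - f')‖² ≤ ‖f'‖² + ‖g'‖²`, so the
energy is at most `(P/ρ²) ∫ r dr + B ∫ dr/r` over `[1 - ρ, 1]`, where `P = ∫ ‖g - f‖²`,
`A = ∫ ‖f' - g'‖²` and `B = ∫ (‖f'‖² + ‖g'‖²) = A/(8ρ²)`. Since `g - f` is periodic and vanishes
at `θ₀`, it vanishes at both ends of `[θ₀, θ₀ + 2π]`, and a Dirichlet Poincaré inequality there
(proved by expanding `∫ ‖h' - φ h‖² ≥ 0` for the solution `φ = -k tan (k (θ - c))` of the Riccati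
equation `φ' + φ² = -k²`) gives `P ≤ (33/8) A = 33 B ρ²`. As `A ≤ 2B` forces `ρ ≤ 1/2`, and then
`log (1/(1-ρ)) ≤ ρ + 2ρ²`, the total is at most `34 ρ B = (17/√2) √(A B)`.
-/

theorem Function.Periodic.deriv {𝕜 F : Type*} [NontriviallyNormedField 𝕜] [NormedAddCommGroup F]
    [NormedSpace 𝕜 F] {f : 𝕜 → F} {T : 𝕜} (hf : Function.Periodic f T) :
    Function.Periodic (deriv f) T := fun x => by
  rw [← deriv_comp_add_const, show (fun y => f (y + T)) = f from funext hf]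

section Poincare

variable {E : Type*} [NormedAddCommGroup E] [InnerProductSpace ℝ E]

theorem integral_neg_deriv_add_sq_mul_norm_sq_le {a b : ℝ} (hab : a ≤ b) {φ φ' : ℝ → ℝ}
    (hφ : ∀ x ∈ Icc a b, HasDerivAt φ (φ' x) x) (hφ' : ContinuousOn φ' (Icc a b))
    {h : ℝ → E} (hh : ContDiff ℝ 1 h) (ha : h a = 0) (hb : h b = 0) :
    ∫ x in a..b, -(φ' x + φ x ^ 2) * ‖h x‖ ^ 2 ≤ ∫ x in a..b, ‖deriv h x‖ ^ 2 := by
  have hI : uIcc a b = Icc a b := uIcc_of_le hab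
  have hc := hh.continuous
  have hc' := hh.continuous_deriv le_rfl
  have hφc : ContinuousOn φ (Icc a b) := fun x hx => (hφ x hx).continuousAt.continuousWithinAt
  have hint : ∀ {u : ℝ → ℝ}, ContinuousOn u (Icc a b) →
      IntervalIntegrable u MeasureTheory.volume a b := fun hu => (hI ▸ hu).intervalIntegrable
  -- `ψ'` is the derivative of `φ ‖h‖²`, which vanishes at both endpoints.
  set ψ' : ℝ → ℝ := fun x => φ' x * ‖h x‖ ^ 2 + φ x * (2 * inner ℝ (h x) (deriv h x))
  have hψ : ∫ x in a..b, ψ' x = 0 := by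
    rw [integral_eq_sub_of_hasDerivAt (f := fun x => φ x * ‖h x‖ ^ 2)]
    · simp [ha, hb]
    · intro x hx
      have hhx := (hh.differentiable one_ne_zero x).hasDerivAt
      exact (hφ x (hI ▸ hx)).mul hhx.norm_sq
    · exact hint (by fun_prop)
  have hpoint : ∀ x, ‖deriv h x - φ x • h x‖ ^ 2 + ψ' x
      = ‖deriv h x‖ ^ 2 + (φ' x + φ x ^ 2) * ‖h x‖ ^ 2 := by
    intro x
    rw [norm_sub_sq_real, real_inner_smul_right, norm_smul, mul_pow, Real.norm_eq_abs, sq_abs,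
      real_inner_comm]
    ring
  have hkey : (∫ x in a..b, ‖deriv h x‖ ^ 2) - ∫ x in a..b, -(φ' x + φ x ^ 2) * ‖h x‖ ^ 2
      = ∫ x in a..b, ‖deriv h x - φ x • h x‖ ^ 2 := by
    rw [← integral_sub, ← add_zero (∫ x in a..b, ‖deriv h x - φ x • h x‖ ^ 2), ← hψ,
      ← integral_add]
    · exact integral_congr fun x _ => by rw [hpoint]; ring
    all_goals exact hint (by fun_prop)
  have hnonneg : 0 ≤ ∫ x in a..b, ‖deriv h x - φ x • h x‖ ^ 2 :=
    integral_nonneg hab fun x _ => sq_nonneg _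
  linarith

theorem hasDerivAt_neg_mul_tan {k c x : ℝ} (hx : cos (k * (x - c)) ≠ 0) :
    HasDerivAt (fun y => -(k * tan (k * (y - c))))
      (-(k ^ 2 + (-(k * tan (k * (x - c)))) ^ 2)) x := by
  have hlin : HasDerivAt (fun y => k * (y - c)) k x := by
    simpa using ((hasDerivAt_id x).sub_const c).const_mul k
  refine (((hasDerivAt_tan hx).comp x hlin).const_mul k).neg.congr_deriv ?_
  rw [one_div, ← inv_one_add_tan_sq hx, inv_inv]
  ring

theorem sq_mul_integral_norm_sq_le_integral_norm_deriv_sq {a b k : ℝ} (hab : a ≤ b) (hk : 0 ≤ k)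
    (hkab : k * (b - a) < π) {h : ℝ → E} (hh : ContDiff ℝ 1 h) (ha : h a = 0) (hb : h b = 0) :
    k ^ 2 * ∫ x in a..b, ‖h x‖ ^ 2 ≤ ∫ x in a..b, ‖deriv h x‖ ^ 2 := by
  set c := (a + b) / 2 with hc
  -- `k (b - a) < π` keeps `k (x - c)` inside `(-π/2, π/2)`, where `tan` is smooth.
  have hcos : ∀ x ∈ Icc a b, cos (k * (x - c)) ≠ 0 := fun x hx =>
    have := mul_nonneg hk (sub_nonneg.2 hx.1)
    have := mul_nonneg hk (sub_nonneg.2 hx.2)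
    (cos_pos_of_mem_Ioo ⟨by nlinarith, by nlinarith⟩).ne'
  have hφ : ContinuousOn (fun x => -(k * tan (k * (x - c)))) (Icc a b) :=
    fun x hx => (hasDerivAt_neg_mul_tan (hcos x hx)).continuousAt.continuousWithinAt
  refine le_of_eq_of_le ?_ (integral_neg_deriv_add_sq_mul_norm_sq_le hab
    (fun x hx => hasDerivAt_neg_mul_tan (hcos x hx)) (by fun_prop) hh ha hb)
  rw [← integral_const_mul]
  exact integral_congr fun x _ => by ring

theorem sq_mul_integral_norm_sq_le_of_periodic {h : ℝ → E} {T k θ₀ : ℝ}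
    (hper : Function.Periodic h T) (hh : ContDiff ℝ 1 h) (h0 : h θ₀ = 0) (hT : 0 ≤ T)
    (hk : 0 ≤ k) (hkT : k * T < π) :
    k ^ 2 * ∫ x in 0..T, ‖h x‖ ^ 2 ≤ ∫ x in 0..T, ‖deriv h x‖ ^ 2 := by
  have hshift : ∀ u : ℝ → ℝ, Function.Periodic u T →
      ∫ x in 0..T, u x = ∫ x in θ₀..θ₀ + T, u x := fun u hu => by
    simpa using hu.intervalIntegral_add_eq 0 θ₀
  rw [hshift _ fun x => by simp only [hper x], hshift _ fun x => by simp only [hper.deriv x]]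
  exact sq_mul_integral_norm_sq_le_integral_norm_deriv_sq (by linarith) hk (by simpa using hkT)
    hh h0 ((hper θ₀).trans h0)

theorem integral_norm_sub_sq_le_of_periodic {f g : ℝ → E} (hf : ContDiff ℝ 1 f)
    (hg : ContDiff ℝ 1 g) (hfp : Function.Periodic f (2 * π)) (hgp : Function.Periodic g (2 * π))
    {θ₀ : ℝ} (hθ₀ : f θ₀ = g θ₀) :
    8 / 33 * ∫ θ in 0..2 * π, ‖g θ - f θ‖ ^ 2 ≤ ∫ θ in 0..2 * π, ‖deriv f θ - deriv g θ‖ ^ 2 := by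
  -- Any `k² < 1/4` would do; `8/33` is what the constant `17/√2` of the energy bound needs.
  have hk : √(8 / 33) * (2 * π) < π := by
    nlinarith [pi_pos, sqrt_lt_sqrt (by norm_num) (by norm_num : (8 / 33 : ℝ) < 1 / 4),
      sqrt_sq (by norm_num : (0 : ℝ) ≤ 1 / 2)]
  have := sq_mul_integral_norm_sq_le_of_periodic (hgp.sub hfp) (hg.sub hf)
    (sub_eq_zero.2 hθ₀.symm) (by positivity) (sqrt_nonneg _) hk
  have hderiv : ∀ x, deriv (g - f) x = deriv g x - deriv f x := fun x =>
    deriv_sub (hg.differentiable one_ne_zero x) (hf.differentiable one_ne_zero x)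
  rw [sq_sqrt (by norm_num)] at this
  exact this.trans_eq (integral_congr fun x _ => by rw [hderiv, norm_sub_rev])

end Poincare

theorem norm_sub_sq_le_two_mul {F : Type*} [SeminormedAddCommGroup F] (x y : F) :
    ‖x - y‖ ^ 2 ≤ 2 * (‖x‖ ^ 2 + ‖y‖ ^ 2) := by
  nlinarith [norm_sub_le x y, norm_nonneg (x - y), sq_nonneg (‖x‖ - ‖y‖)]

theorem intervalIntegral.integral_mono_on_of_nonneg {f g : ℝ → ℝ} {a b : ℝ} (hab : a ≤ b)
    (hf : ∀ x ∈ Icc a b, 0 ≤ f x) (hg : IntervalIntegrable g MeasureTheory.volume a b)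
    (h : ∀ x ∈ Icc a b, f x ≤ g x) : ∫ x in a..b, f x ≤ ∫ x in a..b, g x := by
  rw [integral_of_le hab, integral_of_le hab]
  refine MeasureTheory.integral_mono_of_nonneg ?_ hg.1 ?_ <;>
    filter_upwards [MeasureTheory.ae_restrict_mem measurableSet_Ioc] with x hx
  exacts [hf x (Ioc_subset_Icc_self hx), h x (Ioc_subset_Icc_self hx)]

theorem integral_mul_add_inv_sq_mul {a b c B : ℝ} (ha : 0 < a) (hab : a ≤ b) :
    ∫ r in a..b, r * (c + (r⁻¹) ^ 2 * B) = c * ((b ^ 2 - a ^ 2) / 2) + B * log (b / a) := by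
  have hpos : ∀ r ∈ uIcc a b, 0 < r := fun r hr => ha.trans_le ((uIcc_of_le hab) ▸ hr).1
  rw [integral_congr (g := fun r => c * r + B * r⁻¹) fun r hr => by
      field_simp [(hpos r hr).ne'],
    integral_add, integral_const_mul, integral_const_mul, integral_id,
    integral_inv_of_pos ha (ha.trans_le hab)]
  · exact (continuous_const.mul continuous_id).intervalIntegrable _ _
  · exact (continuousOn_const.mul
      (continuousOn_inv₀.mono fun r hr => (hpos r hr).ne')).intervalIntegrable

theorem log_one_div_one_sub_le {x : ℝ} (hx : x ≤ 1 / 2) :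
    log (1 / (1 - x)) ≤ x + 2 * x ^ 2 := by
  have h1x : 0 < 1 - x := by linarith
  refine (log_le_sub_one_of_pos (by positivity)).trans ?_
  rw [div_sub_one h1x.ne', div_le_iff₀ h1x]
  nlinarith

theorem annulus_energy_le_of_poincare {A B P ρ : ℝ} (hB : 0 < B) (hρ0 : 0 < ρ) (hρ : ρ ≤ 1 / 2)
    (hA : A = 8 * B * ρ ^ 2) (hP : 8 / 33 * P ≤ A) :
    (1 / ρ) ^ 2 * P * ((1 ^ 2 - (1 - ρ) ^ 2) / 2) + B * log (1 / (1 - ρ)) ≤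
      17 / √2 * √(A * B) := by
  have hsqrt : √(A * B) = 2 * √2 * ρ * B := by
    rw [← sqrt_sq (by positivity : 0 ≤ 2 * √2 * ρ * B), mul_pow, mul_pow, mul_pow,
      sq_sqrt zero_le_two, hA]
    ring_nf
  have hPρ : (1 / ρ) ^ 2 * P ≤ 33 * B := by
    rw [div_pow, one_pow, one_div_mul_eq_div, div_le_iff₀ (by positivity)]
    linarith
  calc (1 / ρ) ^ 2 * P * ((1 ^ 2 - (1 - ρ) ^ 2) / 2) + B * log (1 / (1 - ρ))
      ≤ 33 * B * ((1 ^ 2 - (1 - ρ) ^ 2) / 2) + B * (ρ + 2 * ρ ^ 2) := by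
        gcongr
        · nlinarith
        · exact log_one_div_one_sub_le hρ
    _ ≤ 34 * ρ * B := by nlinarith
    _ = 17 / √2 * √(A * B) := by
        rw [hsqrt]
        field_simp
        ring

section Interpolation

variable {F : Type*} [SeminormedAddCommGroup F] [NormedSpace ℝ F]

theorem norm_add_smul_sub_sq_le (x y : F) {s : ℝ} (hs0 : 0 ≤ s) (hs1 : s ≤ 1) :
    ‖x + s • (y - x)‖ ^ 2 ≤ ‖x‖ ^ 2 + ‖y‖ ^ 2 := by
  have hconv : ‖x + s • (y - x)‖ ≤ (1 - s) * ‖x‖ + s * ‖y‖ := by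
    rw [show x + s • (y - x) = (1 - s) • x + s • y by module]
    refine (norm_add_le _ _).trans_eq ?_
    rw [norm_smul, norm_smul, Real.norm_of_nonneg (by linarith), Real.norm_of_nonneg hs0]
  nlinarith [norm_nonneg x, norm_nonneg y, norm_nonneg (x + s • (y - x)),
    mul_nonneg (mul_nonneg hs0 (sub_nonneg.2 hs1)) (sq_nonneg (‖x‖ - ‖y‖))]

theorem integral_norm_smul_sq_add_mul_norm_add_smul_sub_sq_le {u v w : ℝ → F}
    (hu : Continuous u) (hv : Continuous v) (hw : Continuous w) {T c s t : ℝ} (hT : 0 ≤ T)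
    (hs0 : 0 ≤ s) (hs1 : s ≤ 1) (ht : 0 ≤ t) :
    ∫ x in 0..T, (‖c • w x‖ ^ 2 + t * ‖u x + s • (v x - u x)‖ ^ 2) ≤
      c ^ 2 * (∫ x in 0..T, ‖w x‖ ^ 2) + t * ∫ x in 0..T, (‖u x‖ ^ 2 + ‖v x‖ ^ 2) := by
  have hint : ∀ {φ : ℝ → ℝ}, Continuous φ → IntervalIntegrable φ MeasureTheory.volume 0 T :=
    fun hφ => hφ.intervalIntegrable _ _
  rw [← integral_const_mul, ← integral_const_mul, ← integral_add (hint (by fun_prop))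
    (hint (by fun_prop))]
  refine integral_mono_on hT (hint (by fun_prop)) (hint (by fun_prop)) fun x _ => ?_
  rw [norm_smul, mul_pow, Real.norm_eq_abs, sq_abs]
  gcongr
  exact norm_add_smul_sub_sq_le _ _ hs0 hs1

theorem integral_annulus_energy_le {u v w : ℝ → F} (hu : Continuous u) (hv : Continuous v)
    (hw : Continuous w) {T ρ : ℝ} (hT : 0 ≤ T) (hρ0 : 0 < ρ) (hρ1 : ρ < 1) :
    ∫ r in (1 - ρ)..1, r * ∫ θ in 0..T,
        (‖(1 / ρ) • w θ‖ ^ 2 + (r⁻¹) ^ 2 * ‖u θ + ((r + ρ - 1) / ρ) • (v θ - u θ)‖ ^ 2) ≤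
      (1 / ρ) ^ 2 * (∫ θ in 0..T, ‖w θ‖ ^ 2) * ((1 ^ 2 - (1 - ρ) ^ 2) / 2) +
        (∫ θ in 0..T, (‖u θ‖ ^ 2 + ‖v θ‖ ^ 2)) * log (1 / (1 - ρ)) := by
  have hρ1' : 0 < 1 - ρ := by linarith
  have hr0 : ∀ r ∈ uIcc (1 - ρ) 1, r ≠ 0 := fun r hr =>
    (hρ1'.trans_le (uIcc_of_le (by linarith : 1 - ρ ≤ 1) ▸ hr).1).ne'
  rw [← integral_mul_add_inv_sq_mul hρ1' (by linarith)]
  refine integral_mono_on_of_nonneg (by linarith) (fun r hr => ?_)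
    (ContinuousOn.intervalIntegrable (by fun_prop (disch := exact hr0))) fun r hr => ?_
  · exact mul_nonneg (by linarith [hr.1]) (integral_nonneg hT fun θ _ => by positivity)
  · refine mul_le_mul_of_nonneg_left ?_ (by linarith [hr.1])
    exact integral_norm_smul_sq_add_mul_norm_add_smul_sub_sq_le hu hv hw hT
      (div_nonneg (by linarith [hr.1]) hρ0.le) ((div_le_one hρ0).2 (by linarith [hr.2]))
      (by positivity)

end Interpolation

/-- Energy bound for the interpolating annulus map (Lemma `l:approx`, case `R = 1`):
with `ŵ(r,θ) = f(θ) + ((r+ρ-1)/ρ)(g(θ)-f(θ))` on `B₁ \ B_{1-ρ}`, the Dirichlet energy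
`∫ |∇ŵ|² = ∫_{1-ρ}^1 r (∫_{S¹} |∂_r ŵ|² + r^{-2}|∂_θ ŵ|²)` is bounded by
`(17/√2)·(∫|f'-g'|² · ∫(|f'|²+|g'|²))^{1/2}`. -/
theorem stmt_8 (N : ℕ) (f g : ℝ → EuclideanSpace ℝ (Fin N)) (ρ : ℝ)
    (hf : ContDiff ℝ 1 f) (hg : ContDiff ℝ 1 g)
    (hfp : Function.Periodic f (2*π)) (hgp : Function.Periodic g (2*π))
    (hagree : ∃ θ₀, f θ₀ = g θ₀)
    (hden : 0 < ∫ θ in (0:ℝ)..(2*π), (‖deriv f θ‖^2 + ‖deriv g θ‖^2))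
    (hρpos : 0 < ρ)
    (hρ : ρ^2 = (∫ θ in (0:ℝ)..(2*π), ‖deriv f θ - deriv g θ‖^2) /
      (8 * ∫ θ in (0:ℝ)..(2*π), (‖deriv f θ‖^2 + ‖deriv g θ‖^2))) :
    (∫ r in (1-ρ)..(1:ℝ), r * ∫ θ in (0:ℝ)..(2*π),
        (‖(1/ρ) • (g θ - f θ)‖^2 +
          (r⁻¹)^2 * ‖deriv f θ + ((r + ρ - 1)/ρ) • (deriv g θ - deriv f θ)‖^2)) ≤
      (17 / Real.sqrt 2) *
        Real.sqrt ((∫ θ in (0:ℝ)..(2*π), ‖deriv f θ - deriv g θ‖^2) *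
          (∫ θ in (0:ℝ)..(2*π), (‖deriv f θ‖^2 + ‖deriv g θ‖^2))) := by
  obtain ⟨θ₀, hθ₀⟩ := hagree
  set A := ∫ θ in (0:ℝ)..(2*π), ‖deriv f θ - deriv g θ‖^2
  set B := ∫ θ in (0:ℝ)..(2*π), (‖deriv f θ‖^2 + ‖deriv g θ‖^2)
  have hf' := hf.continuous_deriv le_rfl
  have hg' := hg.continuous_deriv le_rfl
  have hA : A = 8 * B * ρ ^ 2 := by rw [hρ]; field_simp
  have hρ_le : ρ ≤ 1 / 2 := by
    have : A ≤ 2 * B := by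
      rw [← integral_const_mul]
      exact integral_mono_on (by positivity) ((by fun_prop : Continuous _).intervalIntegrable _ _)
        ((by fun_prop : Continuous _).intervalIntegrable _ _) fun θ _ => norm_sub_sq_le_two_mul _ _
    have : ρ ^ 2 ≤ 1 / 4 := by nlinarith
    nlinarith
  calc _ ≤ _ := integral_annulus_energy_le (w := fun θ => g θ - f θ) hf' hg'
        (hg.continuous.sub hf.continuous) (by positivity) hρpos (by linarith)
    _ ≤ _ := annulus_energy_le_of_poincare hden hρpos hρ_le hA
        (integral_norm_sub_sq_le_of_periodic hf hg hfp hgp hθ₀)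
end

section
/- Let ζ be a holomorphic function on the unit disk B₁ ⊂ ℂ with ∫_{B₁}|ζ|² < ∞, and let h ∈ W₀^{1,2}(B₁) (real-valued with zero boundary trace). Then ∫_{B₁} h²·|ζ|² ≤ 8·(∫_{B₁}|∇h|²)·(∫_{B₁}|ζ|²). -/
/-!
By the mean value property and Jensen's inequality, `|ζ(z)|²` is at most the average of `|ζ|²`
over the disc of radius `(1 - |z|)/2` about `z`, so `|ζ(z)|² ≤ 4 ‖ζ‖₂² / (π (1 - |z|)²)`.
It remains to prove Hardy's inequality `∫ h² / (1 - |z|)² ≤ 4 ∫ |∇h|²`. In polar coordinates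
this reduces to a one-dimensional inequality along each ray, which follows by integrating by
parts against `φ(R) = R / (1 - R) + log (1 - R)`, a primitive of `R / (1 - R)²` satisfying
`0 ≤ φ ≤ R / (1 - R)`, and absorbing the cross term by AM-GM. Finally `16 / π ≤ 8`.
-/

open Real MeasureTheory Metric Set

section Polar

variable {E : Type*} [NormedAddCommGroup E] [NormedSpace ℝ E]

lemma circleMap_eq_add_polarCoord_symm (c : ℂ) (p : ℝ × ℝ) :
    circleMap c p.1 p.2 = c + Complex.polarCoord.symm p := by
  simp [circleMap, Complex.polarCoord_symm_apply, Complex.exp_mul_I, ← Complex.ofReal_cos,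
    ← Complex.ofReal_sin]

theorem integral_ball_eq_setIntegral_polar (F : ℂ → E) (c : ℂ) (r : ℝ) :
    ∫ z in ball c r, F z = ∫ p in Ioo 0 r ×ˢ Ioo (-π) π, p.1 • F (circleMap c p.1 p.2) := by
  have hball : ∀ p ∈ polarCoord.target,
      c + Complex.polarCoord.symm p ∈ ball c r ↔ p ∈ Iio r ×ˢ univ := by
    rintro p ⟨hp, -⟩
    simp [abs_of_pos (mem_Ioi.1 hp)]
  calc ∫ z in ball c r, F z = ∫ z, (ball c r).indicator F (c + z) := by
        rw [integral_add_left_eq_self, integral_indicator measurableSet_ball]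
    _ = ∫ p in polarCoord.target, p.1 • (ball c r).indicator F (c + Complex.polarCoord.symm p) :=
        (Complex.integral_comp_polarCoord_symm _).symm
    _ = ∫ p in polarCoord.target,
          (Iio r ×ˢ univ).indicator (fun p => p.1 • F (circleMap c p.1 p.2)) p := by
        refine setIntegral_congr_fun polarCoord.open_target.measurableSet fun p hp => ?_
        by_cases hpr : p ∈ Iio r ×ˢ univ
        · rw [indicator_of_mem hpr, indicator_of_mem ((hball p hp).2 hpr),
            circleMap_eq_add_polarCoord_symm]
        · rw [indicator_of_notMem hpr, indicator_of_notMem (mt (hball p hp).1 hpr), smul_zero]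
    _ = _ := by
        rw [setIntegral_indicator (measurableSet_Iio.prod MeasurableSet.univ), polarCoord_target,
          prod_inter_prod, Ioi_inter_Iio, inter_univ]

variable {F : ℂ → E} {c : ℂ} {r : ℝ}

theorem integrableOn_polar (hF : ContinuousOn F (closedBall c r)) :
    IntegrableOn (fun p : ℝ × ℝ => p.1 • F (circleMap c p.1 p.2)) (Ioo 0 r ×ˢ Ioo (-π) π) := by
  refine (ContinuousOn.integrableOn_compact (isCompact_Icc.prod isCompact_Icc) ?_).mono_set
    (prod_mono Ioo_subset_Icc_self Ioo_subset_Icc_self)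
  exact continuousOn_fst.smul (hF.comp (by fun_prop) fun p hp =>
    closedBall_subset_closedBall hp.1.2 (circleMap_mem_closedBall c hp.1.1 p.2))

theorem integral_ball_eq_integral_integral_polar (hF : ContinuousOn F (closedBall c r)) :
    ∫ z in ball c r, F z = ∫ θ in Ioo (-π) π, ∫ R in Ioo 0 r, R • F (circleMap c R θ) := by
  rw [integral_ball_eq_setIntegral_polar, Measure.volume_eq_prod, ← setIntegral_prod_swap,
    setIntegral_prod]
  · rfl
  · exact (integrableOn_polar hF).swap

theorem integrableOn_integral_polar (hF : ContinuousOn F (closedBall c r)) :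
    IntegrableOn (fun θ => ∫ R in Ioo 0 r, R • F (circleMap c R θ)) (Ioo (-π) π) := by
  have := (integrableOn_polar hF).swap
  rw [IntegrableOn, ← Measure.prod_restrict] at this
  exact this.integral_prod_left

theorem integral_Ioo_circleMap_eq_circleAverage (F : ℂ → E) (c : ℂ) (R : ℝ) :
    ∫ θ in Ioo (-π) π, F (circleMap c R θ) = (2 * π) • circleAverage F c R := by
  rw [circleAverage_eq_integral_add (-π), smul_inv_smul₀ two_pi_pos.ne',
    intervalIntegral.integral_comp_add_right (fun θ => F (circleMap c R θ)),
    intervalIntegral.integral_of_le (by linarith [pi_pos]), integral_Ioc_eq_integral_Ioo]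
  ring_nf

theorem integral_ball_eq_integral_circleAverage (hF : ContinuousOn F (closedBall c r))
    (hr : 0 ≤ r) :
    ∫ z in ball c r, F z = (2 * π) • ∫ R in 0..r, R • circleAverage F c R := by
  rw [integral_ball_eq_setIntegral_polar, Measure.volume_eq_prod,
    setIntegral_prod _ (integrableOn_polar hF), intervalIntegral.integral_of_le hr,
    integral_Ioc_eq_integral_Ioo, ← integral_smul]
  refine setIntegral_congr_fun measurableSet_Ioo fun R _ => ?_
  rw [integral_smul, integral_Ioo_circleMap_eq_circleAverage, smul_comm]

end Polar

section SubMean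

variable {f : ℂ → ℂ} {c : ℂ} {r : ℝ}

theorem DiffContOnCl.sq_norm_le_circleAverage (hf : DiffContOnCl ℂ f (ball c r)) (hr : 0 < r) :
    ‖f c‖ ^ 2 ≤ Real.circleAverage (fun z => ‖f z‖ ^ 2) c r := by
  have hcont : Continuous fun θ => f (circleMap c r θ) := by
    refine hf.continuousOn.comp_continuous (continuous_circleMap c r) fun θ => ?_
    rw [closure_ball c hr.ne']
    exact circleMap_mem_closedBall c hr.le θ
  have hmean : Real.circleAverage f c r = f c := by
    rw [← abs_of_pos hr] at hf
    exact hf.circleAverage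
  have hconvex : ConvexOn ℝ univ fun w : ℂ => ‖w‖ ^ 2 :=
    convexOn_univ_norm.pow (fun _ _ => norm_nonneg _) 2
  rw [← hmean, circleAverage_eq_intervalAverage, circleAverage_eq_intervalAverage]
  refine hconvex.map_set_average_le (by fun_prop) isClosed_univ ?_ ?_ (by simp) ?_ ?_
  · simp
  · simp [ENNReal.mul_eq_top]
  · exact hcont.integrableOn_uIoc
  · exact (hcont.norm.pow 2).integrableOn_uIoc

theorem DiffContOnCl.mul_sq_norm_le_integral_ball (hf : DiffContOnCl ℂ f (ball c r))
    (hr : 0 < r) :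
    π * r ^ 2 * ‖f c‖ ^ 2 ≤ ∫ z in ball c r, ‖f z‖ ^ 2 := by
  have hcont : ContinuousOn (fun z => ‖f z‖ ^ 2) (closedBall c r) := by
    rw [← closure_ball c hr.ne']
    exact hf.continuousOn.norm.pow 2
  have havg : ContinuousOn (Real.circleAverage (fun z => ‖f z‖ ^ 2) c) (Icc 0 r) :=
    ContinuousOn.circleAverage (hcont.mono fun z hz => by simpa [dist_eq_norm] using hz.2)
      fun R hR => hR.1
  rw [integral_ball_eq_integral_circleAverage hcont hr.le, smul_eq_mul]
  calc π * r ^ 2 * ‖f c‖ ^ 2 = 2 * π * ∫ R in 0..r, R * ‖f c‖ ^ 2 := by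
        rw [intervalIntegral.integral_mul_const, integral_id]
        ring
    _ ≤ 2 * π * ∫ R in 0..r, R • Real.circleAverage (fun z => ‖f z‖ ^ 2) c R := by
        gcongr
        refine intervalIntegral.integral_mono_on_of_le_Ioo hr.le ?_ ?_ fun R hR => ?_
        · exact (continuous_id.mul continuous_const).intervalIntegrable _ _
        · exact (continuousOn_id.smul havg).intervalIntegrable_of_Icc hr.le
        exact mul_le_mul_of_nonneg_left
          ((hf.mono (ball_subset_ball hR.2.le)).sq_norm_le_circleAverage hR.1) hR.1.le

theorem DifferentiableOn.mul_sq_norm_le_setIntegral {U : Set ℂ} (hf : DifferentiableOn ℂ f U)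
    (hfU : IntegrableOn (fun z => ‖f z‖ ^ 2) U) (hr : 0 < r) (hcU : closedBall c r ⊆ U) :
    π * r ^ 2 * ‖f c‖ ^ 2 ≤ ∫ z in U, ‖f z‖ ^ 2 := by
  refine (((hf.mono ?_).diffContOnCl).mul_sq_norm_le_integral_ball hr).trans
    (setIntegral_mono_set hfU (ae_of_all _ fun z => by positivity)
      (ball_subset_closedBall.trans hcU).eventuallyLE)
  rwa [closure_ball c hr.ne']

theorem DifferentiableOn.sq_norm_le_div_one_sub_norm_sq {z : ℂ}
    (hf : DifferentiableOn ℂ f (ball 0 1))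
    (hf2 : IntegrableOn (fun w => ‖f w‖ ^ 2) (ball 0 1)) (hz : z ∈ ball 0 1) :
    ‖f z‖ ^ 2 ≤ 4 / π * (∫ w in ball 0 1, ‖f w‖ ^ 2) / (1 - ‖z‖) ^ 2 := by
  have hz1 : 0 < 1 - ‖z‖ := by linarith [mem_ball_zero_iff.1 hz]
  have hsub : closedBall z ((1 - ‖z‖) / 2) ⊆ ball 0 1 :=
    closedBall_subset_ball' (by rw [dist_zero_right]; linarith)
  have := hf.mul_sq_norm_le_setIntegral hf2 (by linarith) hsub
  rw [le_div_iff₀ (by positivity), div_mul_eq_mul_div, le_div_iff₀ pi_pos]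
  linarith

end SubMean

section Hardy

noncomputable def hardyPotential (R : ℝ) : ℝ := R / (1 - R) + log (1 - R)

lemma hasDerivAt_hardyPotential {R : ℝ} (hR : R < 1) :
    HasDerivAt hardyPotential (R / (1 - R) ^ 2) R := by
  have h1R : 1 - R ≠ 0 := by linarith
  have hsub : HasDerivAt (fun R : ℝ => 1 - R) (-1) R := by
    simpa using (hasDerivAt_id R).const_sub 1
  refine (((hasDerivAt_id' R).div hsub h1R).add (hsub.log h1R)).congr_deriv ?_
  field_simp
  ring

lemma hardyPotential_nonneg {R : ℝ} (hR : R < 1) : 0 ≤ hardyPotential R := by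
  have hlog := one_sub_inv_le_log_of_pos (sub_pos.2 hR)
  have h1R : 1 - R ≠ 0 := by linarith
  have hinv : 1 - (1 - R)⁻¹ = -(R / (1 - R)) := by field_simp; ring
  rw [hardyPotential]
  linarith

lemma hardyPotential_le {R : ℝ} (h0 : 0 ≤ R) (h1 : R < 1) : hardyPotential R ≤ R / (1 - R) := by
  have hlog := log_nonpos (by linarith) (by linarith : 1 - R ≤ 1)
  rw [hardyPotential]
  linarith

lemma neg_two_mul_mul_le_of_le_div_one_sub {a b R φ : ℝ} (hR : 0 ≤ R) (hφ0 : 0 ≤ φ)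
    (hφ : φ ≤ R / (1 - R)) :
    -(2 * a * b * φ) ≤ a ^ 2 * (R / (1 - R) ^ 2) / 2 + 2 * (R * b ^ 2) := by
  set t := (1 - R)⁻¹
  have hab : 0 ≤ |a| * |b| + a * b := by
    rw [← abs_mul]
    exact neg_le_iff_add_nonneg'.1 (neg_abs_le _)
  rw [div_eq_mul_inv] at hφ
  rw [div_eq_mul_inv R, ← inv_pow]
  linear_combination mul_nonneg hR (sq_nonneg (|a| * t - 2 * |b|)) / 2 +
    2 * mul_nonneg (mul_nonneg (abs_nonneg a) (abs_nonneg b)) (sub_nonneg.2 hφ) +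
    2 * mul_nonneg hφ0 hab + R * t ^ 2 / 2 * sq_abs a + 2 * R * sq_abs b

theorem integral_mul_sq_div_one_sub_sq_le {g g' : ℝ → ℝ} {ρ : ℝ} (hρ0 : 0 ≤ ρ) (hρ1 : ρ < 1)
    (hg : ∀ x ∈ Icc 0 ρ, HasDerivAt g (g' x) x) (hg' : ContinuousOn g' (Icc 0 ρ))
    (hgρ : g ρ = 0) :
    ∫ R in 0..ρ, R * (g R ^ 2 / (1 - R) ^ 2) ≤ 4 * ∫ R in 0..ρ, R * g' R ^ 2 := by
  have hIcc : uIcc 0 ρ = Icc 0 ρ := uIcc_of_le hρ0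
  have hgc : ContinuousOn g (Icc 0 ρ) := fun x hx => (hg x hx).continuousAt.continuousWithinAt
  have hw : ContinuousOn (fun R => R / (1 - R) ^ 2) (Icc 0 ρ) :=
    continuousOn_id.div (by fun_prop) fun R hR => pow_ne_zero 2 (by linarith [hR.2])
  have hφ : ContinuousOn hardyPotential (Icc 0 ρ) := fun R hR =>
    (hasDerivAt_hardyPotential (hR.2.trans_lt hρ1)).continuousAt.continuousWithinAt
  have hA : ∫ R in 0..ρ, R * (g R ^ 2 / (1 - R) ^ 2)
      = ∫ R in 0..ρ, g R ^ 2 * (R / (1 - R) ^ 2) := by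
    congr 1; ext R; ring
  have hparts : ∫ R in 0..ρ, g R ^ 2 * (R / (1 - R) ^ 2)
      = -∫ R in 0..ρ, 2 * g R * g' R * hardyPotential R := by
    rw [intervalIntegral.integral_mul_deriv_eq_deriv_mul (u := fun R => g R ^ 2)
      (fun x hx => by simpa using (hg x (hIcc ▸ hx)).fun_pow 2)
      (fun x hx => hasDerivAt_hardyPotential ((hIcc ▸ hx).2.trans_lt hρ1))
      (((continuousOn_const.mul hgc).mul hg').intervalIntegrable_of_Icc hρ0)
      (hw.intervalIntegrable_of_Icc hρ0)]
    simp [hgρ, hardyPotential]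
  have hbound : -∫ R in 0..ρ, 2 * g R * g' R * hardyPotential R
      ≤ (∫ R in 0..ρ, g R ^ 2 * (R / (1 - R) ^ 2)) / 2 + 2 * ∫ R in 0..ρ, R * g' R ^ 2 := by
    rw [← intervalIntegral.integral_neg, ← intervalIntegral.integral_div,
      ← intervalIntegral.integral_const_mul, ← intervalIntegral.integral_add]
    · refine intervalIntegral.integral_mono_on hρ0 ?_ ?_ fun R hR => ?_
      · exact ((continuousOn_const.mul hgc).mul hg' |>.mul hφ |>.neg).intervalIntegrable_of_Icc hρ0
      · exact (((hgc.pow 2).mul hw).div_const 2 |>.add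
          (continuousOn_const.mul (continuousOn_id.mul (hg'.pow 2)))).intervalIntegrable_of_Icc hρ0
      have hR1 : R < 1 := hR.2.trans_lt hρ1
      exact neg_two_mul_mul_le_of_le_div_one_sub hR.1 (hardyPotential_nonneg hR1)
        (hardyPotential_le hR.1 hR1)
    · exact (((hgc.pow 2).mul hw).div_const 2).intervalIntegrable_of_Icc hρ0
    · exact (continuousOn_const.mul (continuousOn_id.mul (hg'.pow 2))).intervalIntegrable_of_Icc hρ0
  rw [hA]
  linarith

theorem integral_mul_sq_comp_smul_div_one_sub_sq_le {E : Type*} [NormedAddCommGroup E]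
    [NormedSpace ℝ E] {h : E → ℝ} (hh : ContDiff ℝ 1 h) {e : E} (he : ‖e‖ ≤ 1) {ρ : ℝ}
    (hρ0 : 0 ≤ ρ) (hρ1 : ρ < 1) (hρ : h (ρ • e) = 0) :
    ∫ R in 0..ρ, R * (h (R • e) ^ 2 / (1 - R) ^ 2)
      ≤ 4 * ∫ R in 0..ρ, R * ‖fderiv ℝ h (R • e)‖ ^ 2 := by
  have hderiv : ∀ R : ℝ, HasDerivAt (fun R : ℝ => h (R • e)) (fderiv ℝ h (R • e) e) R := by
    intro R
    simpa [Function.comp_def] using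
      ((hh.differentiable one_ne_zero (R • e)).hasFDerivAt).comp_hasDerivAt R
      ((hasDerivAt_id R).smul_const e)
  have hfd : Continuous fun R : ℝ => fderiv ℝ h (R • e) :=
    (hh.continuous_fderiv one_ne_zero).comp (by fun_prop)
  refine (integral_mul_sq_div_one_sub_sq_le hρ0 hρ1 (fun R _ => hderiv R)
    (hfd.clm_apply continuous_const).continuousOn hρ).trans ?_
  gcongr
  refine intervalIntegral.integral_mono_on hρ0 ?_ ?_ fun R hR => ?_
  · exact (continuous_id.mul ((hfd.clm_apply continuous_const).pow 2)).intervalIntegrable _ _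
  · exact (continuous_id.mul (hfd.norm.pow 2)).intervalIntegrable _ _
  refine mul_le_mul_of_nonneg_left ?_ hR.1
  rw [← sq_abs]
  gcongr
  calc |fderiv ℝ h (R • e) e| ≤ ‖fderiv ℝ h (R • e)‖ * ‖e‖ := (fderiv ℝ h (R • e)).le_opNorm e
    _ ≤ ‖fderiv ℝ h (R • e)‖ := mul_le_of_le_one_right (norm_nonneg _) he

variable {h : ℂ → ℝ}

lemma continuousOn_sq_div_one_sub_norm_sq (hh : Continuous h) {ρ : ℝ} (hρ1 : ρ < 1) :
    ContinuousOn (fun z => h z ^ 2 / (1 - ‖z‖) ^ 2) (closedBall 0 ρ) :=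
  (hh.pow 2).continuousOn.div (by fun_prop) fun z hz =>
    pow_ne_zero 2 (by linarith [mem_closedBall_zero_iff.1 hz])

lemma integrableOn_sq_div_one_sub_norm_sq (hh : Continuous h) (hsupp : tsupport h ⊆ ball 0 1) :
    IntegrableOn (fun z => h z ^ 2 / (1 - ‖z‖) ^ 2) (ball 0 1) := by
  obtain ⟨ρ, hρ, hsuppρ⟩ := exists_pos_lt_subset_ball one_pos (isClosed_tsupport h) hsupp
  refine ((continuousOn_sq_div_one_sub_norm_sq hh hρ.2).integrableOn_compact
    (isCompact_closedBall 0 ρ)).of_forall_sdiff_eq_zero measurableSet_ball fun z hz => ?_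
  simp [image_eq_zero_of_notMem_tsupport fun hz' => hz.2 (ball_subset_closedBall (hsuppρ hz'))]

theorem integral_sq_div_one_sub_norm_sq_le (hh : ContDiff ℝ 1 h)
    (hsupp : tsupport h ⊆ ball 0 1) :
    ∫ z in ball 0 1, h z ^ 2 / (1 - ‖z‖) ^ 2 ≤ 4 * ∫ z in ball 0 1, ‖fderiv ℝ h z‖ ^ 2 := by
  obtain ⟨ρ, ⟨hρ0, hρ1⟩, hsuppρ⟩ := exists_pos_lt_subset_ball one_pos (isClosed_tsupport h) hsupp
  have hvanish : ∀ z ∉ ball (0 : ℂ) ρ, h z = 0 := fun z hz =>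
    image_eq_zero_of_notMem_tsupport fun hz' => hz (hsuppρ hz')
  have hvanish' : ∀ z ∉ ball (0 : ℂ) ρ, fderiv ℝ h z = 0 := fun z hz =>
    image_eq_zero_of_notMem_tsupport fun hz' => hz (hsuppρ (tsupport_fderiv_subset ℝ hz'))
  have hF₁ := continuousOn_sq_div_one_sub_norm_sq hh.continuous hρ1
  have hF₂ : ContinuousOn (fun z => ‖fderiv ℝ h z‖ ^ 2) (closedBall 0 ρ) :=
    ((hh.continuous_fderiv one_ne_zero).norm.pow 2).continuousOn
  rw [setIntegral_eq_of_subset_of_forall_sdiff_eq_zero measurableSet_ball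
      (ball_subset_ball hρ1.le) fun z hz => by simp [hvanish z hz.2],
    setIntegral_eq_of_subset_of_forall_sdiff_eq_zero measurableSet_ball
      (ball_subset_ball hρ1.le) fun z hz => by simp [hvanish' z hz.2],
    integral_ball_eq_integral_integral_polar hF₁, integral_ball_eq_integral_integral_polar hF₂,
    ← integral_const_mul]
  refine integral_mono (integrableOn_integral_polar hF₁)
    ((integrableOn_integral_polar hF₂).const_mul 4) fun θ => ?_
  have hray : ∀ R : ℝ, R • Complex.exp (θ * Complex.I) = circleMap 0 R θ := fun R => by
    rw [circleMap_zero, Complex.real_smul]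
  have key := integral_mul_sq_comp_smul_div_one_sub_sq_le hh (by simp) hρ0.le hρ1
    (hvanish _ (hray ρ ▸ circleMap_notMem_ball 0 ρ θ))
  simp only [intervalIntegral.integral_of_le hρ0.le, integral_Ioc_eq_integral_Ioo, hray] at key
  simp only [smul_eq_mul]
  refine le_of_eq_of_le (setIntegral_congr_fun measurableSet_Ioo fun R hR => ?_) key
  simp [abs_of_pos hR.1]

end Hardy

theorem DifferentiableOn.integral_sq_mul_sq_norm_le {f : ℂ → ℂ} {h : ℂ → ℝ}
    (hf : DifferentiableOn ℂ f (ball 0 1)) (hf2 : IntegrableOn (fun z => ‖f z‖ ^ 2) (ball 0 1))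
    (hh : Continuous h) (hsupp : tsupport h ⊆ ball 0 1) :
    ∫ z in ball 0 1, h z ^ 2 * ‖f z‖ ^ 2
      ≤ 4 / π * (∫ z in ball 0 1, ‖f z‖ ^ 2) * ∫ z in ball 0 1, h z ^ 2 / (1 - ‖z‖) ^ 2 := by
  set I := ∫ z in ball 0 1, ‖f z‖ ^ 2
  have hpoint : ∀ z ∈ ball (0 : ℂ) 1,
      h z ^ 2 * ‖f z‖ ^ 2 ≤ 4 / π * I * (h z ^ 2 / (1 - ‖z‖) ^ 2) := fun z hz => by
    have := hf.sq_norm_le_div_one_sub_norm_sq hf2 hz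
    calc h z ^ 2 * ‖f z‖ ^ 2 ≤ h z ^ 2 * (4 / π * I / (1 - ‖z‖) ^ 2) := by gcongr
      _ = _ := by ring
  have hint := (integrableOn_sq_div_one_sub_norm_sq hh hsupp).const_mul (4 / π * I)
  have hint' : IntegrableOn (fun z => h z ^ 2 * ‖f z‖ ^ 2) (ball 0 1) :=
    hint.mono' (((hh.pow 2).continuousOn.mul
      (hf.continuousOn.norm.pow 2)).aestronglyMeasurable measurableSet_ball)
      ((ae_restrict_iff' measurableSet_ball).2 (ae_of_all _ fun z hz => by
        rw [Real.norm_of_nonneg (by positivity)]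
        exact hpoint z hz))
  rw [← integral_const_mul]
  exact setIntegral_mono_on hint' hint measurableSet_ball hpoint

/-- Wente-type estimate (Proposition `c:hardy`): for a holomorphic `ζ ∈ L²(B₁)` and
`h ∈ W₀^{1,2}(B₁)` (here realized as a `C¹` function with support in the open unit disk),
`∫_{B₁} h²|ζ|² ≤ 8 (∫_{B₁} |∇h|²)(∫_{B₁} |ζ|²)`. -/
theorem stmt_12 (ζ : ℂ → ℂ) (h : ℂ → ℝ)
    (hζ : DifferentiableOn ℂ ζ (Metric.ball 0 1))
    (hζ2 : IntegrableOn (fun z => ‖ζ z‖^2) (Metric.ball 0 1) volume)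
    (hh : ContDiff ℝ 1 h) (hsupp : tsupport h ⊆ Metric.ball 0 1) :
    ∫ z in Metric.ball (0:ℂ) 1, (h z)^2 * ‖ζ z‖^2 ≤
      8 * (∫ z in Metric.ball (0:ℂ) 1, ‖fderiv ℝ h z‖^2) *
        (∫ z in Metric.ball (0:ℂ) 1, ‖ζ z‖^2) := by
  set I := ∫ z in ball (0 : ℂ) 1, ‖ζ z‖ ^ 2
  set D := ∫ z in ball (0 : ℂ) 1, ‖fderiv ℝ h z‖ ^ 2
  have hπ : 16 / π ≤ 8 := by
    rw [div_le_iff₀ pi_pos]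
    linarith [pi_gt_three]
  have hDI : 0 ≤ D * I := mul_nonneg (setIntegral_nonneg measurableSet_ball fun _ _ => by positivity)
    (setIntegral_nonneg measurableSet_ball fun _ _ => by positivity)
  calc ∫ z in ball 0 1, h z ^ 2 * ‖ζ z‖ ^ 2
      ≤ 4 / π * I * ∫ z in ball 0 1, h z ^ 2 / (1 - ‖z‖) ^ 2 :=
        hζ.integral_sq_mul_sq_norm_le hζ2 hh.continuous hsupp
    _ ≤ 4 / π * I * (4 * D) := by
        gcongr
        exact integral_sq_div_one_sub_norm_sq_le hh hsupp
    _ ≤ 8 * D * I := by linear_combination mul_le_mul_of_nonneg_right hπ hDI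
end

section
/- Let Σ be a branched minimal immersion of the 2-sphere into a closed Riemannian 3-manifold (M, g(0)) and let g(t) evolve by Ricci flow. Then d/dt|_{t=0} Area_{g(t)}(Σ) ≤ -4π - (Area_{g(0)}(Σ)/2)·min_M R(0), where R(0) is the scalar curvature at time 0. (Uses Gauss–Bonnet with branch points: ∫_Σ K_Σ = 4π + 2π·Σᵢbᵢ where bᵢ ≥ 0 are the branching orders.) -/
/- The Gauss equation for a minimal surface gives `K_Σ = K_M - |A|²/2`, and in dimension 3
`R - Ric(N, N) = K_M + R/2`; hence the first-variation integrand `R - Ric(N, N)` is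
`K_Σ + |A|²/2 + R/2 ≥ K_Σ + min R / 2`, while Gauss–Bonnet with branch points gives
`∫ K_Σ ≥ 4π`. -/

open MeasureTheory Real Finset

theorem MeasureTheory.integral_add_const {S E : Type*} [MeasurableSpace S]
    [NormedAddCommGroup E] [NormedSpace ℝ E] [CompleteSpace E] {μ : Measure S}
    [IsFiniteMeasure μ] {f : S → E} (hf : Integrable f μ) (c : E) :
    ∫ p, (f p + c) ∂μ = ∫ p, f p ∂μ + μ.real Set.univ • c := by
  rw [integral_add hf (integrable_const c), integral_const]

theorem stmt_19_general {S : Type*} [MeasurableSpace S] (μ : Measure S) [IsFiniteMeasure μ]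
    (Area : ℝ → ℝ) (Rsc Ricnn Ksig KM Asq : S → ℝ) (Rmin : ℝ)
    (k : ℕ) (b : Fin k → ℕ)
    (hRint : Integrable Rsc μ) (hRicint : Integrable Ricnn μ)
    (hKint : Integrable Ksig μ)
    (hgauss : ∀ p, Ksig p = KM p - Asq p / 2)
    (h3d : ∀ p, Rsc p - Ricnn p = KM p + Rsc p / 2)
    (hAsq : ∀ p, 0 ≤ Asq p)
    (hRmin : ∀ p, Rmin ≤ Rsc p)
    (hGB : (∫ p, Ksig p ∂μ) = 4*π + 2*π * ∑ i, (b i : ℝ))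
    (hvar : HasDerivAt Area (-∫ p, (Rsc p - Ricnn p) ∂μ) 0) :
    deriv Area 0 ≤ -(4*π) - (μ Set.univ).toReal / 2 * Rmin := by
  have hintegrand : ∀ p, Ksig p + Rmin / 2 ≤ Rsc p - Ricnn p := fun p => by
    linarith [hgauss p, h3d p, hAsq p, hRmin p]
  have hlower :
      ∫ p, Ksig p ∂μ + μ.real Set.univ * (Rmin / 2) ≤ ∫ p, (Rsc p - Ricnn p) ∂μ := by
    rw [← smul_eq_mul, ← integral_add_const hKint]
    exact integral_mono (hKint.add (integrable_const _)) (hRint.sub hRicint) hintegrand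
  have hbranch : 0 ≤ 2*π * ∑ i, (b i : ℝ) := by positivity
  rw [hvar.deriv, ← measureReal_def]
  linarith

/-- Lemma `l:upper` of Colding–Minicozzi: for a branched minimal immersion `Σ` of the
2-sphere in a closed 3-manifold evolving by Ricci flow,
`d/dt|_{t=0} Area_{g(t)}(Σ) ≤ -4π - (Area_{g(0)}(Σ)/2)·min_M R(0)`.
The surface is encoded as a finite measure space `(S, μ)` (area measure, so
`Area_{g(0)}(Σ) = μ(S)`); the first variation formula (`hvar`), the Gauss equation for
(branched) minimal surfaces (`hgauss`), the 3-dimensional curvature identity (`h3d`),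
and the Gauss–Bonnet theorem with branch points of orders `b i > 0`
(`hGB : ∫ K_Σ = 4π + 2π Σᵢ bᵢ`) are given, together with `|A|² ≥ 0` and
`Rmin ≤ R` pointwise. -/
theorem stmt_19 {S : Type*} [MeasurableSpace S] (μ : Measure S) [IsFiniteMeasure μ]
    (Area : ℝ → ℝ) (Rsc Ricnn Ksig KM Asq : S → ℝ) (Rmin : ℝ)
    (k : ℕ) (b : Fin k → ℕ) (hb : ∀ i, 0 < b i)
    (hRint : Integrable Rsc μ) (hRicint : Integrable Ricnn μ)
    (hKint : Integrable Ksig μ) (hKMint : Integrable KM μ) (hAint : Integrable Asq μ)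
    (hgauss : ∀ p, Ksig p = KM p - Asq p / 2)
    (h3d : ∀ p, Rsc p - Ricnn p = KM p + Rsc p / 2)
    (hAsq : ∀ p, 0 ≤ Asq p)
    (hRmin : ∀ p, Rmin ≤ Rsc p)
    (hGB : (∫ p, Ksig p ∂μ) = 4*π + 2*π * ∑ i, (b i : ℝ))
    (hvar : HasDerivAt Area (-∫ p, (Rsc p - Ricnn p) ∂μ) 0) :
    deriv Area 0 ≤ -(4*π) - (μ Set.univ).toReal / 2 * Rmin :=
  stmt_19_general μ Area Rsc Ricnn Ksig KM Asq Rmin k b hRint hRicint hKint hgauss h3d hAsq hRmin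
    hGB hvar
end
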